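/- For x ∈ ℝ^n set d_i = S_i(x) for 1 ≤ i ≤ n, define d'_i = max(d_i, (i/n)·d_n) for 1 ≤ i ≤ n−1 and d'_n = d_n, and let x' ∈ ℝ^n be the unique vector with S_i(x') = d'_i for all i. Then r(x) = r(x'). -/

import Mathlib

/-- The dominant cone `C = {x ∈ ℝⁿ : x₁ ≥ x₂ ≥ ⋯ ≥ xₙ}`. -/
def domCone (n : ℕ) : Set (EuclideanSpace ℝ (Fin n)) :=
  {x | ∀ i j : Fin n, i ≤ j → x j ≤ x i}

/-- `r` is the map sending each point of `ℝⁿ` to the (unique) closest point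
of the dominant cone. -/
def IsClosestPointMap (n : ℕ)
    (r : EuclideanSpace ℝ (Fin n) → EuclideanSpace ℝ (Fin n)) : Prop :=
  ∀ x, r x ∈ domCone n ∧ ∀ c ∈ domCone n, dist x (r x) ≤ dist x c

/-- `S_k(x) = x₁ + ⋯ + x_k`, the sum of the first `k` coordinates. -/
def psum {n : ℕ} (x : Fin n → ℝ) (k : ℕ) : ℝ :=
  ∑ j ∈ Finset.univ.filter (fun j : Fin n => (j : ℕ) < k), x j

/-!
Write `p = r x`. Since the dominant cone `C` is a convex cone, `p` is characterised by
`p ∈ C`, `⟪x - p, p⟫ = 0` and `⟪x - p, c⟫ ≤ 0` for all `c ∈ C`. Abel summation turns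
`⟪y, c⟫` into `∑ₖ Sₖ(y) (cₖ - cₖ₊₁) + Sₙ(y) cₙ`, so the dual cone of `C` consists of the `y` with
`Sₖ(y) ≤ 0` for `k < n` and `Sₙ(y) = 0`, and the characterisation reads:
`Sₖ(x) ≤ Sₖ(p)` with equality for `k = n` and at every `k < n` where `pₖ > pₖ₊₁`.
Because `p` is dominant, `(k/n) Sₙ(p) ≤ Sₖ(p)`, so replacing `Sₖ(x)` by
`max(Sₖ(x), (k/n) Sₙ(x))` preserves all of these conditions: `p` is also `r x'`.
-/

open Finset
open scoped RealInnerProductSpace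

section ClosestPoint

variable {E : Type*} [NormedAddCommGroup E] [InnerProductSpace ℝ E] {K : Set E} {x p q : E}

theorem inner_sub_nonpos_of_forall_dist_le (hK : Convex ℝ K) (hp : p ∈ K)
    (hmin : ∀ c ∈ K, dist x p ≤ dist x c) : ∀ c ∈ K, ⟪x - p, c - p⟫ ≤ 0 := by
  have : Nonempty K := ⟨⟨p, hp⟩⟩
  have hbdd : BddBelow (Set.range fun c : K => ‖x - c‖) :=
    ⟨0, by rintro _ ⟨c, rfl⟩; exact norm_nonneg _⟩
  refine (norm_eq_iInf_iff_real_inner_le_zero hK hp).1 <|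
    le_antisymm (le_ciInf fun c => ?_) (ciInf_le hbdd ⟨p, hp⟩)
  simpa only [dist_eq_norm] using hmin c c.2

theorem eq_of_inner_sub_nonpos (hp : p ∈ K) (hq : q ∈ K)
    (hpx : ∀ c ∈ K, ⟪x - p, c - p⟫ ≤ 0) (hqx : ∀ c ∈ K, ⟪x - q, c - q⟫ ≤ 0) : p = q := by
  have h : ⟪q - p, q - p⟫ ≤ 0 := by
    have e : ⟪q - p, q - p⟫ = ⟪x - p, q - p⟫ + ⟪x - q, p - q⟫ := by
      rw [← neg_sub q p, inner_neg_right, ← sub_eq_add_neg, ← inner_sub_left,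
        sub_sub_sub_cancel_left]
    linarith [hpx q hq, hqx p hp]
  exact (sub_eq_zero.1 (real_inner_self_nonpos.1 h)).symm

theorem forall_inner_sub_nonpos_iff_of_smul_mem (hK : ∀ t : ℝ, 0 ≤ t → ∀ c ∈ K, t • c ∈ K)
    (hp : p ∈ K) {y : E} :
    (∀ c ∈ K, ⟪y, c - p⟫ ≤ 0) ↔ ⟪y, p⟫ = 0 ∧ ∀ c ∈ K, ⟪y, c⟫ ≤ 0 := by
  constructor
  · intro h
    have h0 : 0 ≤ ⟪y, p⟫ := by
      have := h 0 (by simpa using hK 0 le_rfl p hp)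
      rwa [zero_sub, inner_neg_right, neg_nonpos] at this
    have h2 : ⟪y, p⟫ ≤ 0 := by
      have e : (2 : ℝ) • p - p = p := by rw [two_smul, add_sub_cancel_right]
      simpa [e] using h _ (hK 2 zero_le_two p hp)
    have horth : ⟪y, p⟫ = 0 := le_antisymm h2 h0
    refine ⟨horth, fun c hc => ?_⟩
    simpa [inner_sub_right, horth] using h c hc
  · rintro ⟨horth, h⟩ c hc
    simpa [inner_sub_right, horth] using h c hc

end ClosestPoint

section DominantCone

variable {n : ℕ}

theorem convex_domCone : Convex ℝ (domCone n) := by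
  intro a ha b hb s t hs ht _ i j hij
  show s * a j + t * b j ≤ s * a i + t * b i
  gcongr
  exacts [ha i j hij, hb i j hij]

theorem smul_mem_domCone {t : ℝ} (ht : 0 ≤ t) {c : EuclideanSpace ℝ (Fin n)}
    (hc : c ∈ domCone n) : t • c ∈ domCone n := fun i j hij =>
  mul_le_mul_of_nonneg_left (hc i j hij) ht

def natCoord (z : Fin n → ℝ) (j : ℕ) : ℝ := if h : j < n then z ⟨j, h⟩ else 0

theorem natCoord_le_of_mem_domCone {c : EuclideanSpace ℝ (Fin n)} (hc : c ∈ domCone n)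
    {i j : ℕ} (hij : i ≤ j) (hj : j < n) : natCoord c j ≤ natCoord c i := by
  rw [natCoord, natCoord, dif_pos hj, dif_pos (hij.trans_lt hj)]
  exact hc ⟨i, hij.trans_lt hj⟩ ⟨j, hj⟩ hij

theorem sum_univ_eq_sum_range_natCoord (g : Fin n → ℝ) :
    ∑ j, g j = ∑ j ∈ range n, natCoord g j := by
  rw [← Fin.sum_univ_eq_sum_range]
  simp [natCoord]

theorem psum_eq_sum_range (z : Fin n → ℝ) {k : ℕ} (hk : k ≤ n) :
    psum z k = ∑ j ∈ range k, natCoord z j := by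
  rw [psum, sum_filter, sum_univ_eq_sum_range_natCoord, ← sum_range_add_sum_Ico _ hk,
    sum_eq_zero (s := Ico k n), add_zero]
  · refine sum_congr rfl fun j hj => ?_
    simp [natCoord, mem_range.1 hj]
  · intro j hj
    simp [natCoord, (mem_Ico.1 hj).1]

theorem psum_sub (x y : EuclideanSpace ℝ (Fin n)) (k : ℕ) :
    psum (x - y) k = psum x k - psum y k := by
  simp only [psum, ← sum_sub_distrib]
  rfl

/-- Abel summation: `⟪y, z⟫ = ∑ₖ Sₖ(y) (zₖ - zₖ₊₁) + Sₙ(y) zₙ`. -/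
theorem inner_eq_sum_psum_mul (y z : EuclideanSpace ℝ (Fin n)) :
    ⟪y, z⟫ = ∑ i ∈ range (n - 1), psum y (i + 1) * (natCoord z i - natCoord z (i + 1))
      + psum y n * natCoord z (n - 1) := by
  have h : ⟪y, z⟫ = ∑ i ∈ range n, natCoord z i • natCoord y i := by
    simp only [PiLp.inner_apply, RCLike.inner_apply, conj_trivial, sum_univ_eq_sum_range_natCoord]
    refine sum_congr rfl fun i _ => ?_
    unfold natCoord
    split_ifs <;> simp
  rw [h, sum_range_by_parts, ← psum_eq_sum_range y le_rfl, sub_eq_neg_add, ← sum_neg_distrib,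
    smul_eq_mul, mul_comm]
  congr 1
  refine sum_congr rfl fun i hi => ?_
  rw [← psum_eq_sum_range y (by have := mem_range.1 hi; omega), smul_eq_mul]
  ring

theorem natCast_mul_psum_le {p : EuclideanSpace ℝ (Fin n)} (hp : p ∈ domCone n) {k : ℕ}
    (hk : k ≤ n) : (k : ℝ) * psum p n ≤ n * psum p k := by
  obtain rfl | hkn := hk.eq_or_lt
  · exact le_rfl
  -- `v` separates the first `k` coordinates (all `≥ v`) from the remaining ones (all `≤ v`).
  set v := natCoord p k
  have hhead : (k : ℝ) * v ≤ psum p k := by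
    rw [psum_eq_sum_range p hk]
    simpa using card_nsmul_le_sum (range k) (natCoord p) v fun j hj =>
      natCoord_le_of_mem_domCone hp (mem_range.1 hj).le hkn
  have htail : psum p n - psum p k ≤ (n - k) * v := by
    rw [psum_eq_sum_range p le_rfl, psum_eq_sum_range p hk, ← sum_range_add_sum_Ico _ hk,
      add_sub_cancel_left]
    simpa [Nat.cast_sub hk] using sum_le_card_nsmul (Ico k n) (natCoord p) v fun j hj =>
      natCoord_le_of_mem_domCone hp (mem_Ico.1 hj).1 (mem_Ico.1 hj).2
  have hkn' : (k : ℝ) ≤ n := by exact_mod_cast hk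
  nlinarith [mul_le_mul_of_nonneg_left htail (Nat.cast_nonneg k),
    mul_le_mul_of_nonneg_left hhead (sub_nonneg.2 hkn')]

def firstOnes (n k : ℕ) : EuclideanSpace ℝ (Fin n) :=
  WithLp.toLp 2 fun j => if (j : ℕ) < k then 1 else 0

theorem firstOnes_mem_domCone (k : ℕ) : firstOnes n k ∈ domCone n := by
  intro i j (hij : (i : ℕ) ≤ j)
  simp only [firstOnes]
  split_ifs <;> norm_num
  omega

theorem neg_firstOnes_self_mem_domCone : -firstOnes n n ∈ domCone n := by
  intro i j _
  simp [firstOnes]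

theorem inner_firstOnes (y : EuclideanSpace ℝ (Fin n)) (k : ℕ) :
    ⟪y, firstOnes n k⟫ = psum y k := by
  simp [firstOnes, psum, PiLp.inner_apply, sum_filter]

theorem psum_mul_natCoord_sub_nonpos {y c : EuclideanSpace ℝ (Fin n)} (hc : c ∈ domCone n)
    (hy : ∀ i, i + 1 < n → psum y (i + 1) ≤ 0) {i : ℕ} (hi : i ∈ range (n - 1)) :
    psum y (i + 1) * (natCoord c i - natCoord c (i + 1)) ≤ 0 := by
  have hi : i + 1 < n := by have := mem_range.1 hi; omega
  exact mul_nonpos_of_nonpos_of_nonneg (hy i hi)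
    (sub_nonneg.2 (natCoord_le_of_mem_domCone hc i.le_succ hi))

theorem forall_inner_nonpos_domCone_iff {y : EuclideanSpace ℝ (Fin n)} :
    (∀ c ∈ domCone n, ⟪y, c⟫ ≤ 0) ↔ (∀ i, i + 1 < n → psum y (i + 1) ≤ 0) ∧ psum y n = 0 := by
  constructor
  · intro h
    refine ⟨fun i _ => inner_firstOnes y (i + 1) ▸ h _ (firstOnes_mem_domCone _),
      le_antisymm (inner_firstOnes y n ▸ h _ (firstOnes_mem_domCone n)) ?_⟩
    simpa [inner_neg_right, inner_firstOnes] using h _ neg_firstOnes_self_mem_domCone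
  · rintro ⟨hy, hyn⟩ c hc
    rw [inner_eq_sum_psum_mul, hyn, zero_mul, add_zero]
    exact sum_nonpos fun i hi => psum_mul_natCoord_sub_nonpos hc hy hi

theorem inner_eq_zero_iff_of_mem_domCone {y p : EuclideanSpace ℝ (Fin n)} (hp : p ∈ domCone n)
    (hy : ∀ i, i + 1 < n → psum y (i + 1) ≤ 0) (hyn : psum y n = 0) :
    ⟪y, p⟫ = 0 ↔ ∀ i, i + 1 < n → psum y (i + 1) = 0 ∨ natCoord p i = natCoord p (i + 1) := by
  rw [inner_eq_sum_psum_mul, hyn, zero_mul, add_zero,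
    sum_eq_zero_iff_of_nonpos fun i hi => psum_mul_natCoord_sub_nonpos hp hy hi]
  simp only [mem_range, Nat.lt_sub_iff_add_lt, mul_eq_zero, sub_eq_zero]

theorem forall_inner_sub_nonpos_domCone_iff {x p : EuclideanSpace ℝ (Fin n)}
    (hp : p ∈ domCone n) :
    (∀ c ∈ domCone n, ⟪x - p, c - p⟫ ≤ 0) ↔
      (∀ i, i + 1 < n → psum x (i + 1) ≤ psum p (i + 1)) ∧ psum x n = psum p n ∧
        ∀ i, i + 1 < n → psum x (i + 1) = psum p (i + 1) ∨ natCoord p i = natCoord p (i + 1) := by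
  rw [forall_inner_sub_nonpos_iff_of_smul_mem (fun _ ht _ hc => smul_mem_domCone ht hc) hp]
  constructor
  · rintro ⟨horth, hdual⟩
    obtain ⟨hle, htot⟩ := forall_inner_nonpos_domCone_iff.1 hdual
    have hslack := (inner_eq_zero_iff_of_mem_domCone hp hle htot).1 horth
    simp only [psum_sub, sub_nonpos, sub_eq_zero] at hle htot hslack
    exact ⟨hle, htot, hslack⟩
  · rintro ⟨hle, htot, hslack⟩
    have hle' : ∀ i, i + 1 < n → psum (x - p) (i + 1) ≤ 0 := by
      simpa only [psum_sub, sub_nonpos] using hle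
    have htot' : psum (x - p) n = 0 := by rw [psum_sub, htot, sub_self]
    refine ⟨(inner_eq_zero_iff_of_mem_domCone hp hle' htot').2 ?_,
      forall_inner_nonpos_domCone_iff.2 ⟨hle', htot'⟩⟩
    simpa only [psum_sub, sub_eq_zero] using hslack

end DominantCone

/-- §2.2 for `GL_n`: if `x'` is the vector whose partial sums are
`d'_i = max(S_i(x), (i/n)·S_n(x))` for `1 ≤ i ≤ n-1` and `d'_n = S_n(x)`,
then `r x = r x'`. -/
theorem stmt_6 (n : ℕ) (hn : 1 ≤ n)
    (r : EuclideanSpace ℝ (Fin n) → EuclideanSpace ℝ (Fin n))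
    (hr : IsClosestPointMap n r)
    (x x' : EuclideanSpace ℝ (Fin n))
    (hx' : ∀ k, 1 ≤ k → k ≤ n →
      psum x' k = if k < n then max (psum x k) ((k : ℝ) / (n : ℝ) * psum x n)
                  else psum x n) :
    r x = r x' := by
  obtain ⟨hp, hpx⟩ := hr x
  obtain ⟨hq, hqx'⟩ := hr x'
  obtain ⟨hle, htot, hslack⟩ := (forall_inner_sub_nonpos_domCone_iff hp).1
    (inner_sub_nonpos_of_forall_dist_le convex_domCone hp hpx)
  have hbound : ∀ k ≤ n, (k : ℝ) / n * psum x n ≤ psum (r x) k := fun k hk => by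
    rw [htot, div_mul_eq_mul_div, div_le_iff₀ (by exact_mod_cast hn)]
    linarith [natCast_mul_psum_le hp hk]
  have hx'_lt : ∀ i, i + 1 < n →
      psum x' (i + 1) = max (psum x (i + 1)) ((i + 1 : ℕ) / n * psum x n) := fun i hi => by
    rw [hx' (i + 1) (Nat.le_add_left 1 i) hi.le, if_pos hi]
  have hx'_n : psum x' n = psum x n := by simpa using hx' n hn le_rfl
  refine eq_of_inner_sub_nonpos hp hq ?_ (inner_sub_nonpos_of_forall_dist_le convex_domCone hq hqx')
  refine (forall_inner_sub_nonpos_domCone_iff hp).2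
    ⟨fun i hi => ?_, hx'_n.trans htot, fun i hi => ?_⟩
  · rw [hx'_lt i hi]
    exact max_le (hle i hi) (hbound _ hi.le)
  · refine (hslack i hi).imp_left fun h => ?_
    rw [hx'_lt i hi, h]
    exact max_eq_left (hbound _ hi.le)
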